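/- Let T be a finite connected graph satisfying property P, let m be a positive integer, and let f be a vertex of the exponential graph K_m^T such that f(v) = f(w) = a for some edge (v,w) of T. Then there exists a vertex f̃ of K_m^T with f̃(x) = a for all vertices x of T, such that the neighborhood of f in K_m^T is contained in the neighborhood of f̃. -/

import Mathlib

/-- A finite graph in the sense of the paper: a symmetric adjacency relation,
loops are allowed. -/
structure PGraph (V : Type) where
  Adj : V → V → Prop
  symm : ∀ {u v}, Adj u v → Adj v u

namespace PGraph

variable {α β : Type}

/-- The complete graph `K_m` on vertex set `Fin m`. -/
def completeG (m : ℕ) : PGraph (Fin m) :=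
  ⟨fun i j => i ≠ j, fun h => h.symm⟩

/-- `f` is a graph homomorphism from `G` to `H`. -/
def IsHom (G : PGraph α) (H : PGraph β) (f : α → β) : Prop :=
  ∀ ⦃u v⦄, G.Adj u v → H.Adj (f u) (f v)

/-- `G` admits a proper coloring with `n` colors. -/
def Colorable (G : PGraph α) (n : ℕ) : Prop :=
  ∃ f : α → Fin n, G.IsHom (completeG n) f

/-- The chromatic number of `G`, as an extended natural number. -/
noncomputable def chromNum (G : PGraph α) : ℕ∞ :=
  sInf ((fun k : ℕ => (k : ℕ∞)) '' {k | G.Colorable k})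

/-- The neighborhood of a vertex. -/
def neighborSet (G : PGraph α) (v : α) : Set α := {w | G.Adj v w}

/-- The categorical product `G × H`. -/
def tensor (G : PGraph α) (H : PGraph β) : PGraph (α × β) :=
  ⟨fun p q => G.Adj p.1 q.1 ∧ H.Adj p.2 q.2, fun h => ⟨G.symm h.1, H.symm h.2⟩⟩

/-- The exponential graph `K_m^G`: vertices are all set maps `V(G) → [m]`,
and `f` is adjacent to `g` iff `f u ≠ g v` for every edge `(u,v)` of `G`
(loops are allowed). -/
def expG (G : PGraph α) (m : ℕ) : PGraph (α → Fin m) :=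
  ⟨fun f g => ∀ u v, G.Adj u v → f u ≠ g v,
   fun {f g} h u v huv e => h v u (G.symm huv) e.symm⟩

/-- `G` is connected: nonempty and any two vertices are joined by a walk. -/
def Connected (G : PGraph α) : Prop :=
  Nonempty α ∧ ∀ u v : α, Relation.ReflTransGen G.Adj u v

/-- Property `P` of the paper: `G` is simple, and for any two disjoint edges
`(v1,w1)` and `(v2,w2)`, if `(v2,v1)` is an edge then `(w2,v1)` or `(w2,w1)`
is an edge. -/
def PropertyP (G : PGraph α) : Prop :=
  (∀ v, ¬ G.Adj v v) ∧
  ∀ ⦃v1 w1 v2 w2 : α⦄, G.Adj v1 w1 → G.Adj v2 w2 →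
    v1 ≠ v2 → v1 ≠ w2 → w1 ≠ v2 → w1 ≠ w2 →
    G.Adj v2 v1 → (G.Adj w2 v1 ∨ G.Adj w2 w1)

/-- Base (unsymmetrized) relation for the Mycielskian:
level-0 copies are adjacent as in `G`, a level-1 vertex is adjacent to the
level-0 copies of the neighbours of its shadow, and the apex `none` is
adjacent to all level-1 vertices. -/
def mycRel (G : PGraph α) : Option (α × Bool) → Option (α × Bool) → Prop
  | some (a, false), some (b, false) => G.Adj a b
  | some (a, true), some (b, false) => G.Adj a b
  | none, some (_, true) => True
  | _, _ => False

/-- The Mycielskian `M(G)`. -/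
def myc (G : PGraph α) : PGraph (Option (α × Bool)) :=
  ⟨fun u v => G.mycRel u v ∨ G.mycRel v u, fun h => h.symm⟩

/-- The double Mycielskian `M(M(K_n))`. -/
def MMK (n : ℕ) : PGraph (Option (Option (Fin n × Bool) × Bool)) :=
  myc (myc (completeG n))

/-- The vertex `(x, i, j)` of `M(M(K_n))`. -/
def vtx {n : ℕ} (x : Fin n) (i j : Bool) : Option (Option (Fin n × Bool) × Bool) :=
  some (some (x, i), j)

/-- The vertex `w_i = (*, i)` of `M(M(K_n))` for `i ∈ {0,1}`. -/
def wv (n : ℕ) (i : Bool) : Option (Option (Fin n × Bool) × Bool) :=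
  some (none, i)

/-- The apex vertex `w_2` of `M(M(K_n))`. -/
def w2 (n : ℕ) : Option (Option (Fin n × Bool) × Bool) := none

end PGraph


/-! Property `P` makes `N(v) ∪ N(w)` closed under taking neighbours whenever `vw` is an edge, so
in a connected graph with property `P` every edge dominates: each vertex is adjacent to one of its
endpoints. A map `f` with `f v = f w = a` then forces every neighbour `g` of `f` in `K_m^T` to avoid
the value `a` everywhere, which is exactly adjacency to the constant map `a`. -/

namespace PGraph

variable {α : Type} {T : PGraph α}

theorem PropertyP.adj_or_adj_of_adj_of_adj (hP : T.PropertyP) {v w u x : α}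
    (hvw : T.Adj v w) (hvu : T.Adj v u) (hux : T.Adj u x) : T.Adj v x ∨ T.Adj w x := by
  by_cases hxv : x = v
  · exact .inr (hxv ▸ T.symm hvw)
  by_cases hxw : x = w
  · exact .inl (hxw ▸ hvw)
  by_cases huw : u = w
  · exact .inr (huw ▸ hux)
  have hvu' : v ≠ u := fun h => hP.1 v (h ▸ hvu)
  exact (hP.2 hvw hux hvu' (Ne.symm hxv) (Ne.symm huw) (Ne.symm hxw) (T.symm hvu)).imp
    T.symm T.symm

theorem PropertyP.adj_or_adj_of_adj_or_adj (hP : T.PropertyP) {v w u x : α}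
    (hvw : T.Adj v w) (hu : T.Adj v u ∨ T.Adj w u) (hux : T.Adj u x) :
    T.Adj v x ∨ T.Adj w x :=
  hu.elim (hP.adj_or_adj_of_adj_of_adj hvw · hux)
    fun hwu => (hP.adj_or_adj_of_adj_of_adj (T.symm hvw) hwu hux).symm

theorem PropertyP.adj_or_adj_of_connected (hP : T.PropertyP) (hconn : T.Connected) {v w : α}
    (hvw : T.Adj v w) (x : α) : T.Adj v x ∨ T.Adj w x := by
  induction hconn.2 v x with
  | refl => exact .inr (T.symm hvw)
  | tail _ hux ih => exact hP.adj_or_adj_of_adj_or_adj hvw ih hux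

theorem neighborSet_expG_subset_const {m : ℕ} {f : α → Fin m} {a : Fin m}
    (h : ∀ x, ∃ y, T.Adj y x ∧ f y = a) :
    (expG T m).neighborSet f ⊆ (expG T m).neighborSet fun _ => a := by
  intro g hg u x _ hax
  obtain ⟨y, hyx, hfy⟩ := h x
  exact hg y x hyx (hfy.trans hax)

end PGraph

namespace Graph

theorem exists_constant_dominating {α : Type} (T : PGraph α)
    (hconn : T.Connected) (hP : T.PropertyP) (m : ℕ)
    (f : α → Fin m) (v w : α) (a : Fin m)
    (hvw : T.Adj v w) (hfv : f v = a) (hfw : f w = a) :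
    ∃ ft : α → Fin m, (∀ x, ft x = a) ∧
      (PGraph.expG T m).neighborSet f ⊆ (PGraph.expG T m).neighborSet ft := by
  refine ⟨fun _ => a, fun _ => rfl, PGraph.neighborSet_expG_subset_const fun x => ?_⟩
  rcases hP.adj_or_adj_of_connected hconn hvw x with hvx | hwx
  · exact ⟨v, hvx, hfv⟩
  · exact ⟨w, hwx, hfw⟩

end Graph
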